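/- If Γ ⊆ ℒ is consistent and strongly compositional, then every maximal ⊨*-model of Γ satisfies Γ. Moreover, if π and π' are two maximal ⊨*-models of Γ then V_π = V_{π'}. -/

import Mathlib

namespace LexPref

/-- A pair consisting of a variable and a total order (as a binary relation) on its domain. -/
structure LexPair (ι : Type*) (D : ι → Type*) where
  var : ι
  ord : D var → D var → Prop
  isLin : IsLinearOrder (D var) ord

/-- An outcome assigns a value to every variable. -/
abbrev Outcome (ι : Type*) (D : ι → Type*) := ∀ i, D i

/-- A lexicographic model: a list of pairs (variable, total order) with pairwise
distinct variables. -/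
abbrev LexModel (ι : Type*) (D : ι → Type*) :=
  { l : List (LexPair ι D) // (l.map LexPair.var).Nodup }

variable {ι : Type*} {D : ι → Type*}

/-- The list of variables occurring in a lex model. -/
def vars (π : LexModel ι D) : List ι := π.1.map LexPair.var

/-- The empty lex model. -/
def emptyModel : LexModel ι D := ⟨[], List.nodup_nil⟩

/-- Composition of lex models: `π` followed by the pairs of `π'` whose variable does
not occur in `π`. -/
def comp [DecidableEq ι] (π π' : LexModel ι D) : LexModel ι D :=
  ⟨π.1 ++ π'.1.filter (fun p => decide (p.var ∉ vars π)), by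
    have h1 : (π'.1.filter (fun p => decide (p.var ∉ vars π))).Sublist π'.1 :=
      List.filter_sublist
    rw [List.map_append, List.nodup_append]
    refine ⟨π.2, (h1.map LexPair.var).nodup π'.2, ?_⟩
    intro x hx y hy
    obtain ⟨p, hp, rfl⟩ := List.mem_map.mp hy
    have hd := (List.mem_filter.mp hp).2
    simp only [decide_eq_true_eq] at hd
    rintro rfl
    exact hd hx⟩

/-- `π'` extends `π`: `π' ≠ π` and the sequence `π'` begins with `π`. -/
def Extends (π' π : LexModel ι D) : Prop := π' ≠ π ∧ π.1 <+: π'.1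

/-- `π' ⊒ π`: `π'` extends or equals `π`. -/
def ExtendsEq (π' π : LexModel ι D) : Prop := π.1 <+: π'.1

/-- Lexicographic weak preference along a list of pairs. -/
def prefList : List (LexPair ι D) → Outcome ι D → Outcome ι D → Prop
  | [], _, _ => True
  | p :: rest, α, β =>
      (α p.var ≠ β p.var ∧ p.ord (α p.var) (β p.var)) ∨
      (α p.var = β p.var ∧ prefList rest α β)

/-- Lexicographic strict preference along a list of pairs. -/
def sprefList : List (LexPair ι D) → Outcome ι D → Outcome ι D → Prop
  | [], _, _ => False
  | p :: rest, α, β =>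
      (α p.var ≠ β p.var ∧ p.ord (α p.var) (β p.var)) ∨
      (α p.var = β p.var ∧ sprefList rest α β)

/-- `α ≽_π β`. -/
def pref (π : LexModel ι D) (α β : Outcome ι D) : Prop := prefList π.1 α β

/-- `α ≻_π β`. -/
def spref (π : LexModel ι D) (α β : Outcome ι D) : Prop := sprefList π.1 α β

/-- `α ≡_π β`: the outcomes agree on all variables of `π`. -/
def eqOn (π : LexModel ι D) (α β : Outcome ι D) : Prop := ∀ X ∈ vars π, α X = β X

section Language

variable {L : Type*} (sat : LexModel ι D → L → Prop)

/-- `π ⊨ Γ`. -/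
def satSet (π : LexModel ι D) (Γ : Set L) : Prop := ∀ φ ∈ Γ, sat π φ

/-- `Γ` is consistent: some lex model satisfies it. -/
def Consistent (Γ : Set L) : Prop := ∃ π, satSet sat π Γ

/-- `π ⊨* φ`: some `π' ⊒ π` satisfies `φ`. -/
def satStar (π : LexModel ι D) (φ : L) : Prop := ∃ π', ExtendsEq π' π ∧ sat π' φ

/-- `π ⊨* Γ`. -/
def satStarSet (π : LexModel ι D) (Γ : Set L) : Prop := ∀ φ ∈ Γ, satStar sat π φ

/-- `φ` is compositional. -/
def CompositionalStmt [DecidableEq ι] (φ : L) : Prop :=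
  ∀ π π', sat π φ → sat π' φ → sat (comp π π') φ

/-- `Γ` is compositional. -/
def Compositional [DecidableEq ι] (Γ : Set L) : Prop :=
  ∀ φ ∈ Γ, CompositionalStmt sat φ

/-- `φ` is strongly compositional. -/
def StronglyCompositionalStmt [DecidableEq ι] (φ : L) : Prop :=
  ∀ π π', satStar sat π φ → sat π' φ → sat (comp π π') φ

/-- `Γ` is strongly compositional. -/
def StronglyCompositional [DecidableEq ι] (Γ : Set L) : Prop :=
  ∀ φ ∈ Γ, StronglyCompositionalStmt sat φ

/-- `π` is a maximal model of `Γ`. -/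
def MaximalModel (π : LexModel ι D) (Γ : Set L) : Prop :=
  satSet sat π Γ ∧ ∀ π', Extends π' π → ¬ satSet sat π' Γ

/-- `π` is a maximal `⊨*`-model of `Γ`. -/
def MaximalStarModel (π : LexModel ι D) (Γ : Set L) : Prop :=
  satStarSet sat π Γ ∧ ∀ π', Extends π' π → ¬ satStarSet sat π' Γ

end Language

/-- `O_σ(𝒜)`: the optimal elements of `A` with respect to `σ`. -/
def opt (σ : LexModel ι D) (A : Set (Outcome ι D)) : Set (Outcome ι D) :=
  {α ∈ A | ∀ β ∈ A, pref σ α β}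

/-- Iterated optimisation `𝒜_{π₁,…,π_k}`. -/
def iterOpt : List (LexModel ι D) → Set (Outcome ι D) → Set (Outcome ι D)
  | [], A => A
  | σ :: rest, A => iterOpt rest (opt σ A)

end LexPref

namespace LexPref

/-!
Composing a maximal `⊨*`-model `π` with any model `σ` of `Γ` yields, by strong
compositionality, a model of `Γ` that begins with `π`; maximality forces `π ∘ σ = π`, so `π`
itself satisfies `Γ` and contains every variable of `σ`. Applying this to two maximal
`⊨*`-models in both orders gives equal variable sets.
-/

section

variable {ι : Type*} {D : ι → Type*} {L : Type*} {sat : LexModel ι D → L → Prop} {Γ : Set L}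

theorem satStarSet_of_satSet {π : LexModel ι D} (h : satSet sat π Γ) : satStarSet sat π Γ :=
  fun φ hφ => ⟨π, List.prefix_refl _, h φ hφ⟩

variable [DecidableEq ι]

theorem extendsEq_comp (π π' : LexModel ι D) : ExtendsEq (comp π π') π :=
  List.prefix_append _ _

theorem vars_subset_of_comp_eq {π π' : LexModel ι D} (h : comp π π' = π) :
    vars π' ⊆ vars π := by
  have hfilter : π'.1.filter (fun p => decide (p.var ∉ vars π)) = [] := by
    have hlen := congrArg (List.length ∘ Subtype.val) h
    simp only [comp, Function.comp_apply, List.length_append] at hlen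
    exact List.eq_nil_of_length_eq_zero (by omega)
  intro x hx
  obtain ⟨p, hp, rfl⟩ := List.mem_map.mp hx
  simpa using List.filter_eq_nil_iff.mp hfilter p hp

theorem satSet_comp (hsc : StronglyCompositional sat Γ) {π σ : LexModel ι D}
    (hπ : satStarSet sat π Γ) (hσ : satSet sat σ Γ) : satSet sat (comp π σ) Γ :=
  fun φ hφ => hsc φ hφ π σ (hπ φ hφ) (hσ φ hφ)

theorem MaximalStarModel.comp_eq (hsc : StronglyCompositional sat Γ) {π σ : LexModel ι D}
    (hπ : MaximalStarModel sat π Γ) (hσ : satSet sat σ Γ) : comp π σ = π := by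
  by_contra hne
  exact hπ.2 _ ⟨hne, extendsEq_comp π σ⟩ (satStarSet_of_satSet (satSet_comp hsc hπ.1 hσ))

theorem MaximalStarModel.satSet_of_consistent (hcons : Consistent sat Γ)
    (hsc : StronglyCompositional sat Γ) {π : LexModel ι D} (hπ : MaximalStarModel sat π Γ) :
    satSet sat π Γ := by
  obtain ⟨σ, hσ⟩ := hcons
  simpa only [hπ.comp_eq hsc hσ] using satSet_comp hsc hπ.1 hσ

end

theorem maximal_star_models_satisfy_general {ι : Type*} {D : ι → Type*} [DecidableEq ι]
    {L : Type*}
    (sat : LexModel ι D → L → Prop) (Γ : Set L)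
    (hcons : Consistent sat Γ) (hsc : StronglyCompositional sat Γ) :
    (∀ π, MaximalStarModel sat π Γ → satSet sat π Γ) ∧
    (∀ π π', MaximalStarModel sat π Γ → MaximalStarModel sat π' Γ →
      (vars π).toFinset = (vars π').toFinset) := by
  have hsat : ∀ π, MaximalStarModel sat π Γ → satSet sat π Γ :=
    fun π hπ => hπ.satSet_of_consistent hcons hsc
  refine ⟨hsat, fun π π' hπ hπ' => ?_⟩
  ext x
  simp only [List.mem_toFinset]
  exact ⟨fun hx => vars_subset_of_comp_eq (hπ'.comp_eq hsc (hsat π hπ)) hx,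
    fun hx => vars_subset_of_comp_eq (hπ.comp_eq hsc (hsat π' hπ')) hx⟩

/-- for consistent strongly compositional `Γ`, every maximal
`⊨*`-model satisfies `Γ`, and any two maximal `⊨*`-models involve the same
set of variables. -/
theorem maximal_star_models_satisfy {ι : Type*} {D : ι → Type*} [DecidableEq ι]
    [Fintype ι] [∀ i, Fintype (D i)] {L : Type*}
    (sat : LexModel ι D → L → Prop) (Γ : Set L)
    (hcons : Consistent sat Γ) (hsc : StronglyCompositional sat Γ) :
    (∀ π, MaximalStarModel sat π Γ → satSet sat π Γ) ∧
    (∀ π π', MaximalStarModel sat π Γ → MaximalStarModel sat π' Γ →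
      (vars π).toFinset = (vars π').toFinset) :=
  maximal_star_models_satisfy_general sat Γ hcons hsc

end LexPref
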